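/- arXiv:1212.4329 — 3 statements merged into one kernel-verified Lean document; each statement's English description precedes it below -/
import Mathlib

section
/- The set PES(ℂ) of all perfectly everywhere surjective functions from ℂ to ℂ is strongly 2^𝔠-algebrable in the algebra ℂ^ℂ, where 𝔠 is the cardinality of the continuum. -/
open Cardinal

/-- A subset `E` of a commutative `K`-algebra `A` is strongly `lam`-algebrable: `E ∪ {0}`
contains a free commutative `K`-algebra with `lam` free generators; concretely, there is an
injective family of `lam` elements of `E` such that every nonzero polynomial over `K` without
constant term, evaluated at distinct members of the family, is nonzero and belongs to `E`. -/
def StronglyAlgebrable (K : Type) {A : Type} [CommRing K] [CommRing A] [Algebra K A]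
    (E : Set A) (lam : Cardinal) : Prop :=
  ∃ (ι : Type) (x : ι → A), #ι = lam ∧ Function.Injective x ∧
    (∀ i, x i ∈ E) ∧
    ∀ n : ℕ, 0 < n → ∀ P : MvPolynomial (Fin n) K, P ≠ 0 →
      MvPolynomial.constantCoeff P = 0 →
      ∀ ξ : Fin n → ι, Function.Injective ξ →
        MvPolynomial.aeval (fun i => x (ξ i)) P ≠ 0 ∧
        MvPolynomial.aeval (fun i => x (ξ i)) P ∈ E

/-- `f ∈ PES(ℂ)`: `f` maps every nonempty perfect subset of `ℂ` onto `ℂ`. -/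
def PES : Set (ℂ → ℂ) :=
  {f | ∀ P : Set ℂ, Perfect P → P.Nonempty → f '' P = Set.univ}

/-!
There are only `𝔠` pairs `(Q, ⟨A, g⟩)` with `Q ⊆ ℂ` nonempty perfect, `A ⊆ ℝ` finite and
`g : 𝒫(A) → ℂ`, while every nonempty perfect set has `𝔠` points, so a transfinite recursion
picks distinct points `z_{Q,A,g} ∈ Q`. For `B ⊆ ℝ` put `x_B(z_{Q,A,g}) = g(B ∩ A)`. Distinct
`B₁, …, Bₙ` are told apart by their traces on some finite `A`, so on every perfect `Q` the map
`z ↦ (x_{B₁}(z), …, x_{Bₙ}(z))` is onto `ℂⁿ`. A polynomial without constant term that is not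
zero is nonconstant, hence onto `ℂ` as `ℂ` is algebraically closed, so `P(x_{B₁}, …, x_{Bₙ})`
lies in PES(ℂ). The `2^𝔠` functions `x_B` are the free generators.
-/

open MvPolynomial Function Set

universe u

theorem StronglyAlgebrable.of_forall_aeval_mem {K A ι : Type} [CommRing K] [Nontrivial K]
    [CommRing A] [Algebra K A] {E : Set A} (x : ι → A) (hE : (0 : A) ∉ E)
    (hx : ∀ n (P : MvPolynomial (Fin n) K), P ≠ 0 → constantCoeff P = 0 →
      ∀ ξ : Fin n → ι, Injective ξ → aeval (fun i => x (ξ i)) P ∈ E) :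
    StronglyAlgebrable K E #ι := by
  refine ⟨ι, x, rfl, fun i j hij => ?_, fun i => ?_,
    fun n _ P hP h0 ξ hξ => ⟨ne_of_mem_of_not_mem (hx n P hP h0 ξ hξ) hE, hx n P hP h0 ξ hξ⟩⟩
  · by_contra hne
    have hξ : Injective ![i, j] :=
      Fin.cons_injective_iff.2 ⟨by simpa using hne, injective_of_subsingleton _⟩
    have := hx 2 (X 0 - X 1) (sub_ne_zero.2 (X_injective.ne (by decide))) (by simp) _ hξ
    simp [hij] at this
    exact hE this
  · simpa using hx 1 (X 0) (X_ne_zero 0) (by simp) (fun _ => i) (injective_of_subsingleton _)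

namespace MvPolynomial

theorem exists_eval_ne_eval_of_forall_ne_C {R σ : Type*} [CommRing R] [IsDomain R] [Infinite R]
    {P : MvPolynomial σ R} (hP : ∀ a, P ≠ C a) : ∃ a b : σ → R, eval a P ≠ eval b P := by
  by_contra! h
  exact hP (eval 0 P) (MvPolynomial.funext fun v => by simpa using h v 0)

theorem eval_surjective_of_forall_ne_C {K σ : Type*} [Field K] [IsAlgClosed K]
    {P : MvPolynomial σ K} (hP : ∀ a, P ≠ C a) : Surjective fun v : σ → K => eval v P := by
  obtain ⟨a, b, hab⟩ := exists_eval_ne_eval_of_forall_ne_C hP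
  -- restrict `P` to the line through `a` and `b`
  let L : Polynomial K :=
    aeval (fun i => Polynomial.C (a i) + Polynomial.X * Polynomial.C (b i - a i)) P
  have hL : ∀ t, L.eval t = eval (fun i => a i + t * (b i - a i)) P := fun t => by
    rw [← Polynomial.coe_aeval_eq_eval, comp_aeval_apply, ← coe_aeval_eq_eval]
    simp
  have hL_deg : L.natDegree ≠ 0 := by
    intro h
    have h01 := congrArg (fun p => Polynomial.eval (0 : K) p - Polynomial.eval 1 p)
      (Polynomial.eq_C_of_natDegree_eq_zero h)
    simp only [hL, Polynomial.eval_C, sub_self] at h01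
    exact hab (by simpa [sub_eq_zero] using h01)
  intro w
  obtain ⟨t, ht⟩ := IsAlgClosed.eval_surjective hL_deg w
  exact ⟨_, (hL t).symm.trans ht⟩

theorem forall_ne_C_of_constantCoeff_eq_zero {R σ : Type*} [CommSemiring R] {P : MvPolynomial σ R}
    (hP : P ≠ 0) (h0 : constantCoeff P = 0) (a : R) : P ≠ C a := by
  rintro rfl
  exact hP (by simpa using h0)

theorem aeval_pi_apply {R σ I A : Type*} [CommSemiring R] [CommSemiring A] [Algebra R A]
    (x : σ → I → A) (P : MvPolynomial σ R) (z : I) :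
    aeval x P z = aeval (fun i => x i z) P :=
  comp_aeval_apply x (Pi.evalAlgHom R (fun _ => A) z) P

end MvPolynomial

section InjectiveChoice

variable {ι α : Type u}

theorem exists_injective_forall_mem_of_isWellOrder (r : ι → ι → Prop) [IsWellOrder ι r]
    (T : ι → Set α) (hT : ∀ i, #{j // r j i} < #(T i)) :
    ∃ h : ι → α, Injective h ∧ ∀ i, h i ∈ T i := by
  have avoid : ∀ i (f : {j // r j i} → α), (T i \ range f).Nonempty := fun i f =>
    sdiff_nonempty.2 fun hsub => (hT i).not_ge ((mk_le_mk_of_subset hsub).trans mk_range_le)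
  let h : ι → α := IsWellFounded.wf.fix fun i prev => (avoid i fun j => prev j.1 j.2).some
  have hh : ∀ i, h i ∈ T i \ range (fun j : {j // r j i} => h j) := fun i => by
    rw [show h i = _ from IsWellFounded.wf.fix_eq _ i]
    exact (avoid i _).some_mem
  refine ⟨h, fun i j hij => ?_, fun i => (hh i).1⟩
  rcases trichotomous_of r i j with hr | rfl | hr
  · exact absurd ⟨⟨i, hr⟩, hij⟩ (hh j).2
  · rfl
  · exact absurd ⟨⟨j, hr⟩, hij.symm⟩ (hh i).2

theorem exists_injective_forall_mem (T : ι → Set α) (hι : #ι ≤ #α)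
    (hT : ∀ i, #α ≤ #(T i)) : ∃ h : ι → α, Injective h ∧ ∀ i, h i ∈ T i := by
  obtain ⟨r, _, hr⟩ := exists_ord_eq ι
  refine exists_injective_forall_mem_of_isWellOrder r T fun i => ?_
  calc #{j // r j i} = (Ordinal.typein r i).card := (Ordinal.card_typein i).symm
    _ < #ι := card_typein_lt i hr
    _ ≤ #(T i) := hι.trans (hT i)

end InjectiveChoice

section IndependentFamily

variable {X Y : Type u}

theorem exists_finset_injective_inter {ι : Type*} [Finite ι] {B : ι → Set X}
    (hB : Injective B) : ∃ A : Finset X, Injective fun i => {a : A | (a : X) ∈ B i} := by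
  have hsep : ∀ i j, i ≠ j → ∃ x, ¬(x ∈ B i ↔ x ∈ B j) := fun i j hij => by
    by_contra! h
    exact hij (hB (Set.ext h))
  choose d hd using hsep
  have hfin : (range fun p : {p : ι × ι // p.1 ≠ p.2} => d _ _ p.2).Finite := finite_range _
  refine ⟨hfin.toFinset, fun i j hij => by_contra fun hne => hd i j hne ?_⟩
  exact Set.ext_iff.1 hij ⟨d i j hne, hfin.mem_toFinset.2 ⟨⟨(i, j), hne⟩, rfl⟩⟩

/-- The functions `traceEval B`, `B ⊆ X`, form Hausdorff's independent family. -/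
def traceEval (B : Set X) (s : Σ A : Finset X, Set A → Y) : Y := s.2 {a | (a : X) ∈ B}

theorem surjective_traceEval {ι : Type*} [Finite ι] [Nonempty Y] {B : ι → Set X}
    (hB : Injective B) : Surjective fun s (i : ι) => traceEval (Y := Y) (B i) s := by
  obtain ⟨A, hA⟩ := exists_finset_injective_inter hB
  intro w
  exact ⟨⟨A, extend (fun i => {a : A | (a : X) ∈ B i}) w fun _ => Classical.arbitrary Y⟩,
    _root_.funext fun i => by simp only [traceEval]; exact hA.extend_apply w _ i⟩

theorem mk_sigma_finset_arrow_le [Infinite X] (h : #X ≤ #Y) :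
    #(Σ A : Finset X, Set A → Y) ≤ #Y := by
  have hY : ℵ₀ ≤ #Y := (aleph0_le_mk X).trans h
  calc #(Σ A : Finset X, Set A → Y) = sum fun A : Finset X => #(Set A → Y) := mk_sigma _
    _ ≤ sum fun _ : Finset X => #Y := sum_le_sum _ _ fun A => by
        rw [← power_def, mk_fintype (Set A)]
        exact power_nat_le hY
    _ = #(Finset X) * #Y := sum_const' _ _
    _ ≤ #Y * #Y := by rw [mk_finset_of_infinite]; gcongr
    _ = #Y := mul_eq_self hY

end IndependentFamily

theorem mk_isClosed_le_continuum {Z : Type*} [TopologicalSpace Z] [SecondCountableTopology Z] :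
    #{s : Set Z | IsClosed s} ≤ 𝔠 := by
  obtain ⟨b, hbc, -, hb⟩ := TopologicalSpace.exists_countable_basis Z
  have hinj : Injective fun s : {s : Set Z | IsClosed s} => {t : b | (t : Set Z) ⊆ s.1ᶜ} := by
    intro s s' h
    have hsub : ∀ t ∈ b, t ⊆ s.1ᶜ ↔ t ⊆ s'.1ᶜ := fun t ht => Set.ext_iff.1 h ⟨t, ht⟩
    refine Subtype.ext (compl_injective ?_)
    rw [hb.open_eq_sUnion' s.2.isOpen_compl, hb.open_eq_sUnion' s'.2.isOpen_compl]
    exact congrArg sUnion (Set.ext fun t => and_congr_right (hsub t))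
  calc #{s : Set Z | IsClosed s} ≤ #(Set b) := mk_le_of_injective hinj
    _ = 2 ^ #b := mk_set
    _ ≤ 2 ^ ℵ₀ := power_le_power_left two_ne_zero hbc.le_aleph0
    _ = 𝔠 := two_power_aleph0

theorem Perfect.continuum_le_mk {Z : Type*} [MetricSpace Z] [CompleteSpace Z] {P : Set Z}
    (hP : Perfect P) (hne : P.Nonempty) : 𝔠 ≤ #P := by
  obtain ⟨f, hrange, -, hinj⟩ := hP.exists_nat_bool_injection hne
  simpa using lift_mk_le_lift_mk_of_injective
    (f := fun a => (⟨f a, hrange ⟨a, rfl⟩⟩ : P)) fun a b hab => hinj (congrArg Subtype.val hab)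

theorem exists_jointly_surjOn_family {Z X Y : Type u} [Infinite X] [Nonempty Y] (𝒬 : Set (Set Z))
    (h𝒬 : #𝒬 ≤ #Z) (hQ : ∀ Q ∈ 𝒬, #Z ≤ #Q) (hXY : #X ≤ #Y) (hYZ : #Y ≤ #Z) :
    ∃ x : Set X → Z → Y, ∀ Q ∈ 𝒬, ∀ {ι : Type*} [Finite ι] (ξ : ι → Set X), Injective ξ →
      SurjOn (fun z i => x (ξ i) z) Q univ := by
  have hZ : ℵ₀ ≤ #Z := (aleph0_le_mk X).trans (hXY.trans hYZ)
  have hcard : #(𝒬 × Σ A : Finset X, Set A → Y) ≤ #Z := by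
    rw [mk_prod, lift_id, lift_id]
    calc #𝒬 * #(Σ A : Finset X, Set A → Y) ≤ #Z * #Z :=
          mul_le_mul' h𝒬 ((mk_sigma_finset_arrow_le hXY).trans hYZ)
      _ = #Z := mul_eq_self hZ
  obtain ⟨h, hinj, hmem⟩ := exists_injective_forall_mem
    (fun p : 𝒬 × (Σ A : Finset X, Set A → Y) => (p.1 : Set Z)) hcard fun p => hQ p.1 p.1.2
  refine ⟨fun B => extend h (fun p => traceEval B p.2) fun _ => Classical.arbitrary Y,
    fun Q hQ ι _ ξ hξ w _ => ?_⟩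
  obtain ⟨s, hs⟩ := surjective_traceEval hξ w
  exact ⟨h (⟨Q, hQ⟩, s), hmem (⟨Q, hQ⟩, s), _root_.funext fun i =>
    (hinj.extend_apply _ _ _).trans (congrFun hs i)⟩

theorem zero_notMem_PES : (0 : ℂ → ℂ) ∉ PES := fun h => by
  obtain ⟨z, -, hz⟩ := (h univ (PerfectSpace.univ_perfect ℂ) univ_nonempty).symm ▸ mem_univ (1 : ℂ)
  exact zero_ne_one hz

theorem aeval_mem_PES {n : ℕ} {x : Fin n → ℂ → ℂ} {P : MvPolynomial (Fin n) ℂ}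
    (hP : ∀ a, P ≠ C a)
    (hx : ∀ Q : Set ℂ, Perfect Q → Q.Nonempty → SurjOn (fun z i => x i z) Q univ) :
    aeval x P ∈ PES := by
  intro Q hQ hne
  have hcomp : (aeval x P : ℂ → ℂ) = (fun v => eval v P) ∘ fun z i => x i z :=
    _root_.funext fun z => aeval_pi_apply x P z
  rw [hcomp]
  exact univ_subset_iff.1 <|
    (surjOn_univ.2 (eval_surjective_of_forall_ne_C hP)).comp (hx Q hQ hne)

/-- `PES(ℂ)` is strongly `2 ^ 𝔠`-algebrable in `ℂ^ℂ`. -/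
theorem stmt5 : StronglyAlgebrable ℂ PES ((2 : Cardinal) ^ Cardinal.continuum) := by
  have hperfect : #{Q : Set ℂ | Perfect Q ∧ Q.Nonempty} ≤ #ℂ := by
    rw [mk_complex]
    exact (mk_le_mk_of_subset fun Q hQ => hQ.1.closed).trans mk_isClosed_le_continuum
  obtain ⟨x, hx⟩ := exists_jointly_surjOn_family (X := ℝ) (Y := ℂ) _ hperfect
    (fun Q hQ => mk_complex ▸ hQ.1.continuum_le_mk hQ.2) (by rw [mk_real, mk_complex]) le_rfl
  rw [← mk_real, ← mk_set]
  exact StronglyAlgebrable.of_forall_aeval_mem x zero_notMem_PES fun n P hP h0 ξ hξ =>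
    aeval_mem_PES (forall_ne_C_of_constantCoeff_eq_zero hP h0) fun Q hQ hne => hx Q ⟨hQ, hne⟩ ξ hξ
end

section
/- The set EDD(ℝ) of all everywhere discontinuous Darboux functions from ℝ to ℝ — that is, functions f : ℝ → ℝ that are continuous at no point of ℝ and map every connected subset of ℝ onto a connected set — is strongly 2^𝔠-algebrable in the algebra ℝ^ℝ, where 𝔠 is the cardinality of the continuum. -/
open Cardinal

/-!
Take a family `(x_A)_{A ⊆ ℝ}` of functions `ℝ → ℝ` such that for distinct `A₁, …, Aₙ` the map
`t ↦ (x_{A₁} t, …, x_{Aₙ} t)` sends every open interval onto `ℝⁿ`: compose Hausdorff's independent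
family, whose domain has size `𝔠`, with a map `ℝ → ℝ ⧸ ℚ` onto that domain, each coset of `ℚ` being
dense. Then for a nonzero polynomial `P` without constant term, `P(x_{A₁}, …, x_{Aₙ})` maps every
open interval onto the range of `P` on `ℝⁿ`, which is connected and contains `0` and a nonzero value.
Such a function is continuous nowhere and maps every non-degenerate connected set onto that range.
-/

open MvPolynomial Set Function

noncomputable section

section ImageIoo

variable {α Y : Type*} [LinearOrder α] [NoMinOrder α] [NoMaxOrder α] {f : α → Y} {S : Set Y}

theorem range_subset_of_image_Ioo_eq (hf : ∀ a b, a < b → f '' Ioo a b = S) : range f ⊆ S := by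
  rintro _ ⟨t, rfl⟩
  obtain ⟨a, hat⟩ := exists_lt t
  obtain ⟨b, htb⟩ := exists_gt t
  exact hf a b (hat.trans htb) ▸ mem_image_of_mem f ⟨hat, htb⟩

variable [TopologicalSpace α] [OrderTopology α] [TopologicalSpace Y]

theorem not_continuousAt_of_image_Ioo_eq [T1Space Y] (hf : ∀ a b, a < b → f '' Ioo a b = S)
    (hS : S.Nontrivial) (x : α) : ¬ContinuousAt f x := by
  intro hx
  obtain ⟨y, hyS, hy⟩ := hS.exists_ne (f x)
  obtain ⟨a, b, hxab, hab⟩ :=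
    mem_nhds_iff_exists_Ioo_subset.mp (hx (isOpen_compl_singleton.mem_nhds hy.symm))
  obtain ⟨t, ht, rfl⟩ : y ∈ f '' Ioo a b := hf a b (hxab.1.trans hxab.2) ▸ hyS
  exact hab ht rfl

theorem isPreconnected_image_of_image_Ioo_eq (hf : ∀ a b, a < b → f '' Ioo a b = S)
    (hS : IsPreconnected S) {C : Set α} (hC : IsPreconnected C) : IsPreconnected (f '' C) := by
  rcases C.subsingleton_or_nontrivial with hsub | ⟨u, hu, v, hv, huv⟩
  · exact (hsub.image f).isPreconnected
  wlog hlt : u < v generalizing u v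
  · exact this v hv u hu huv.symm (huv.lt_or_gt.resolve_left hlt)
  have hSC : S ⊆ f '' C :=
    hf u v hlt ▸ image_mono (Ioo_subset_Icc_self.trans (hC.Icc_subset hu hv))
  have hCS : f '' C ⊆ S := (image_subset_range f C).trans (range_subset_of_image_Ioo_eq hf)
  rwa [hCS.antisymm hSC]

end ImageIoo

section Hausdorff

variable {α β ι : Type*}

open Classical in
/-- Hausdorff's independent family of `2 ^ #α` functions: a point `d = (F, g)` of the common
domain records a finite "test set" `F` and prescribes the value `g (A ∩ F)` to `A`. -/
def hausdorffFamily [Zero β] (A : Set α) (d : Finset α × (Finset α →₀ β)) : β :=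
  d.2 (d.1.filter (· ∈ A))

open Classical in
theorem exists_finset_injective_filter [Finite ι] {ξ : ι → Set α} (hξ : Injective ξ) :
    ∃ F : Finset α, Injective fun i => F.filter (· ∈ ξ i) := by
  have hw : ∀ p : {p : ι × ι // ξ p.1 ≠ ξ p.2}, ∃ w : α, ¬(w ∈ ξ p.1.1 ↔ w ∈ ξ p.1.2) :=
    fun p => not_forall.mp (mt Set.ext p.2)
  choose w hw using hw
  refine ⟨(finite_range w).toFinset, fun i j hij => hξ (by_contra fun hne => hw ⟨(i, j), hne⟩ ?_)⟩
  have hmem : w ⟨(i, j), hne⟩ ∈ (finite_range w).toFinset := by simp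
  simpa [hmem] using congrArg (w ⟨(i, j), hne⟩ ∈ ·) hij

theorem exists_hausdorffFamily_eq [Zero β] [Finite ι] {ξ : ι → Set α} (hξ : Injective ξ)
    (y : ι → β) : ∃ d, ∀ i, hausdorffFamily (ξ i) d = y i := by
  classical
  obtain ⟨F, hF⟩ := exists_finset_injective_filter hξ
  have hsupp : (support (extend (fun i => F.filter (· ∈ ξ i)) y 0)).Finite := by
    refine (finite_range fun i => F.filter (· ∈ ξ i)).subset fun s hs => ?_
    by_contra hns
    exact hs (by rw [extend_apply' _ _ _ hns, Pi.zero_apply])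
  refine ⟨(F, Finsupp.ofSupportFinite _ hsupp), fun i => ?_⟩
  simp only [hausdorffFamily, Finsupp.ofSupportFinite_coe]
  convert hF.extend_apply y 0 i

end Hausdorff

theorem mk_finset_prod_finsupp_real : #(Finset ℝ × (Finset ℝ →₀ ℝ)) = 𝔠 := by
  rw [mk_prod, mk_finsupp_of_infinite, mk_finset_of_infinite, mk_real, lift_id, lift_id,
    max_self, mul_eq_self aleph0_le_continuum]

def ratAddSubgroup : AddSubgroup ℝ := (Rat.castHom ℝ).toAddMonoidHom.range

theorem QuotientAddGroup.image_mk_Ioo_ratAddSubgroup {a b : ℝ} (hab : a < b) :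
    (QuotientAddGroup.mk : ℝ → ℝ ⧸ ratAddSubgroup) '' Ioo a b = Set.univ := by
  refine eq_univ_of_forall fun c => ?_
  obtain ⟨y, rfl⟩ := QuotientAddGroup.mk_surjective c
  obtain ⟨q, hq₁, hq₂⟩ := exists_rat_btwn (sub_lt_sub_right hab y)
  refine ⟨y + q, ⟨by linarith, by linarith⟩, QuotientAddGroup.eq_iff_sub_mem.mpr ⟨q, ?_⟩⟩
  simp

theorem continuum_le_mk_quotient_ratAddSubgroup : 𝔠 ≤ #(ℝ ⧸ ratAddSubgroup) := by
  have hQ : #ratAddSubgroup ≤ ℵ₀ := (countable_range ((↑) : ℚ → ℝ)).le_aleph0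
  have h : 𝔠 ≤ max (max #(ℝ ⧸ ratAddSubgroup) #ratAddSubgroup) ℵ₀ := by
    rw [← mk_real, mk_congr AddSubgroup.addGroupEquivQuotientProdAddSubgroup, mk_prod, lift_id,
      lift_id]
    exact mul_le_max _ _
  rcases le_max_iff.mp h with h | h
  · exact (le_max_iff.mp h).resolve_right (hQ.trans_lt aleph0_lt_continuum).not_ge
  · exact absurd h aleph0_lt_continuum.not_ge

theorem exists_image_Ioo_eq_univ_of_mk_le_continuum {D : Type} [Nonempty D] (hD : #D ≤ 𝔠) :
    ∃ g : ℝ → D, ∀ a b, a < b → g '' Ioo a b = Set.univ := by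
  obtain ⟨e⟩ := (le_def D _).mp (hD.trans continuum_le_mk_quotient_ratAddSubgroup)
  refine ⟨invFun e ∘ QuotientAddGroup.mk, fun a b hab => ?_⟩
  rw [image_comp, QuotientAddGroup.image_mk_Ioo_ratAddSubgroup hab, image_univ,
    (invFun_surjective e.injective).range_eq]

def EverywhereJointlySurjective {ι : Type*} (x : ι → ℝ → ℝ) : Prop :=
  ∀ n (ξ : Fin n → ι), Injective ξ → ∀ a b, a < b → (fun t i => x (ξ i) t) '' Ioo a b = Set.univ

theorem exists_everywhereJointlySurjective :
    ∃ x : Set ℝ → ℝ → ℝ, EverywhereJointlySurjective x := by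
  obtain ⟨g, hg⟩ := exists_image_Ioo_eq_univ_of_mk_le_continuum mk_finset_prod_finsupp_real.le
  refine ⟨fun A t => hausdorffFamily A (g t), fun n ξ hξ a b hab => eq_univ_of_forall fun y => ?_⟩
  obtain ⟨d, hd⟩ := exists_hausdorffFamily_eq hξ y
  obtain ⟨t, ht, rfl⟩ := (hg a b hab).symm ▸ mem_univ d
  exact ⟨t, ht, funext hd⟩

theorem EverywhereJointlySurjective.injective {ι : Type*} {x : ι → ℝ → ℝ}
    (hx : EverywhereJointlySurjective x) : Injective x := by
  intro A B hAB
  by_contra hne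
  have hξ : Injective ![A, B] := by
    intro i j hij
    fin_cases i <;> fin_cases j <;> simp_all [eq_comm]
  obtain ⟨t, -, ht⟩ := (hx 2 ![A, B] hξ 0 1 one_pos).symm ▸ mem_univ ![0, 1]
  have h0 : x A t = 0 := congrFun ht 0
  have h1 : x B t = 1 := congrFun ht 1
  rw [hAB] at h0
  exact zero_ne_one (h0.symm.trans h1)

theorem MvPolynomial.aeval_pi_apply_s7 {σ ι R A : Type*} [CommSemiring R] [CommSemiring A]
    [Algebra R A] (x : σ → ι → A) (P : MvPolynomial σ R) (t : ι) :
    aeval x P t = aeval (fun i => x i t) P := by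
  show Pi.evalAlgHom R (fun _ => A) t (aeval x P) = _
  rw [← AlgHom.comp_apply, comp_aeval]
  rfl

theorem MvPolynomial.nontrivial_range_eval {σ R : Type*} [CommRing R] [IsDomain R] [Infinite R]
    {P : MvPolynomial σ R} (hP : P ≠ 0) (hc : constantCoeff P = 0) :
    (range fun y => eval y P).Nontrivial := by
  obtain ⟨y, hy⟩ : ∃ y, eval y P ≠ 0 := by
    by_contra! h
    exact hP (MvPolynomial.funext fun y => by simp [h y])
  exact ⟨_, mem_range_self y, _, mem_range_self 0, by rwa [eval_zero, hc]⟩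

theorem EverywhereJointlySurjective.aeval_mem {n : ℕ} {ι : Type*} {x : ι → ℝ → ℝ}
    (hx : EverywhereJointlySurjective x) {ξ : Fin n → ι} (hξ : Injective ξ)
    {P : MvPolynomial (Fin n) ℝ} (hP : P ≠ 0) (hc : constantCoeff P = 0) :
    (∀ t, ¬ContinuousAt (aeval (fun i => x (ξ i)) P) t) ∧
      ∀ C : Set ℝ, IsPreconnected C → IsPreconnected (aeval (fun i => x (ξ i)) P '' C) := by
  have himage : ∀ a b, a < b →
      aeval (fun i => x (ξ i)) P '' Ioo a b = range fun y => eval y P := by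
    intro a b hab
    have hcomp : (aeval (fun i => x (ξ i)) P) = (fun y => eval y P) ∘ fun t i => x (ξ i) t :=
      funext fun t => aeval_pi_apply_s7 _ P t
    rw [hcomp, image_comp, hx n ξ hξ a b hab, image_univ]
  refine ⟨not_continuousAt_of_image_Ioo_eq himage (nontrivial_range_eval hP hc),
    fun C => isPreconnected_image_of_image_Ioo_eq himage ?_⟩
  exact isPreconnected_range (continuous_eval P)

end

/-- The set `EDD(ℝ)` of everywhere discontinuous Darboux functions — functions
`f : ℝ → ℝ` continuous at no point which map every connected subset of `ℝ` onto a connected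
set — is strongly `2 ^ 𝔠`-algebrable in `ℝ^ℝ`. -/
theorem stmt7 :
    StronglyAlgebrable ℝ
      {f : ℝ → ℝ | (∀ x : ℝ, ¬ContinuousAt f x) ∧
        ∀ C : Set ℝ, IsPreconnected C → IsPreconnected (f '' C)}
      ((2 : Cardinal) ^ Cardinal.continuum) := by
  obtain ⟨x, hx⟩ := exists_everywhereJointlySurjective
  refine ⟨Set ℝ, x, by rw [mk_set, mk_real], hx.injective, fun A => ?_,
    fun n _ P hP hc ξ hξ => ?_⟩
  · simpa using hx.aeval_mem (ξ := fun _ : Fin 1 => A) (injective_of_subsingleton _)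
      (X_ne_zero 0) (constantCoeff_X ℝ 0)
  · have hP_mem := hx.aeval_mem hξ hP hc
    exact ⟨fun h0 => hP_mem.1 0 (h0 ▸ continuousAt_const), hP_mem⟩
end

section
/- Let F ⊆ ℝ be an Fσ set (a countable union of closed sets) that is not closed and is 𝔠-dense in itself. Then there exists a sequence C₁ ⊊ C₂ ⊊ C₃ ⊊ ⋯ of perfect subsets of ℝ, strictly increasing under inclusion, such that F = ⋃ₙ Cₙ. -/
open Cardinal

/-- `A ⊆ ℝ` is `𝔠`-dense in itself: `A` is nonempty and for every open interval `I`, either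
`A ∩ I = ∅` or `A ∩ I` has cardinality `𝔠`. -/
def CDenseInItself (A : Set ℝ) : Prop :=
  A.Nonempty ∧ ∀ a b : ℝ, a < b →
    A ∩ Set.Ioo a b = ∅ ∨ #(A ∩ Set.Ioo a b : Set ℝ) = Cardinal.continuum

/-!
By Cantor–Bendixson, each closed piece of `F` is a countable set plus a perfect set. A point `x`
of one of the countable parts still lies in a perfect subset of `F`: by `𝔠`-density `F` is
uncountable in every ball around `x`, so each ball `B(x, 1/(k+1))` contains a nonempty perfect
`Q k ⊆ F`, and `{x} ∪ ⋃ k, Q k` is perfect. Hence `F` is a countable union of perfect sets. Its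
partial unions are perfect, hence closed, so none of them is `F`, and a subsequence of them
increases strictly.
-/

open Set Filter Topology Metric

theorem Monotone.exists_strictMono_comp_iSup_eq {α : Type*} [CompleteLattice α] {B : ℕ → α}
    (hB : Monotone B) (h : ∀ n, B n ≠ ⨆ k, B k) :
    ∃ φ : ℕ → ℕ, StrictMono (B ∘ φ) ∧ ⨆ n, B (φ n) = ⨆ n, B n := by
  have hnext : ∀ n, ∃ m, n < m ∧ B n < B m := by
    intro n
    obtain ⟨m, hm⟩ : ∃ m, ¬ B m ≤ B n := by
      by_contra! hle
      exact h n (le_antisymm (le_iSup B n) (iSup_le hle))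
    refine ⟨max m (n + 1), by omega, (hB (by omega)).lt_of_not_ge fun hge => hm ?_⟩
    exact (hB (le_max_left m (n + 1))).trans hge
  choose next hlt hBlt using hnext
  set φ : ℕ → ℕ := fun k => next^[k] 0
  have hφ_succ : ∀ k, φ (k + 1) = next (φ k) := fun k => Function.iterate_succ_apply' next k 0
  have hφ : StrictMono φ := strictMono_nat_of_lt_succ fun k => hφ_succ k ▸ hlt (φ k)
  refine ⟨φ, strictMono_nat_of_lt_succ fun k => ?_, hB.iSup_comp_tendsto_atTop hφ.tendsto_atTop⟩
  simpa only [Function.comp_apply, hφ_succ] using hBlt (φ k)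

section Topology

variable {X : Type*} [TopologicalSpace X]

theorem Preperfect.iUnion {ι : Sort*} {Q : ι → Set X} (h : ∀ i, Preperfect (Q i)) :
    Preperfect (⋃ i, Q i) := by
  simp only [preperfect_iff_subset_derivedSet] at h ⊢
  exact iUnion_subset fun i => (h i).trans (derivedSet_mono _ _ (subset_iUnion Q i))

theorem Preperfect.exists_ne {C : Set X} (hC : Preperfect C) (hne : C.Nonempty) (x : X) :
    ∃ y ∈ C, y ≠ x := by
  obtain ⟨c, hc⟩ := hne
  by_cases hcx : c = x
  · subst hcx
    obtain ⟨y, ⟨-, hy⟩, hyc⟩ := accPt_iff_nhds.mp (hC c hc) univ univ_mem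
    exact ⟨y, hy, hyc⟩
  · exact ⟨c, hc, hcx⟩

theorem perfect_accumulate {Q : ℕ → Set X} (h : ∀ n, Perfect (Q n)) (n : ℕ) :
    Perfect (accumulate Q n) :=
  ⟨(finite_Iic n).isClosed_biUnion fun k _ => (h k).closed,
    Preperfect.iUnion fun k => Preperfect.iUnion fun _ => (h k).acc⟩

theorem exists_perfect_ssubset_chain_eq_sUnion {𝒬 : Set (Set X)} (h𝒬 : 𝒬.Countable)
    (hperf : ∀ Q ∈ 𝒬, Perfect Q) (hnc : ¬ IsClosed (⋃₀ 𝒬)) :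
    ∃ C : ℕ → Set X, (∀ n, Perfect (C n)) ∧ (∀ n, C n ⊂ C (n + 1)) ∧ ⋃₀ 𝒬 = ⋃ n, C n := by
  obtain ⟨Q, rfl⟩ := h𝒬.exists_eq_range <| nonempty_iff_ne_empty.mpr fun h => hnc (by simp [h])
  have hQ : ∀ n, Perfect (Q n) := fun n => hperf _ (mem_range_self n)
  have hB : ∀ n, accumulate Q n ≠ ⋃ k, accumulate Q k := fun n heq => by
    rw [iUnion_accumulate, ← sUnion_range] at heq
    exact hnc (heq ▸ (perfect_accumulate hQ n).closed)
  obtain ⟨φ, hφ, hφU⟩ := monotone_accumulate.exists_strictMono_comp_iSup_eq hB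
  refine ⟨accumulate Q ∘ φ, fun n => perfect_accumulate hQ _, fun n => hφ n.lt_succ_self, ?_⟩
  rw [sUnion_range, ← iUnion_accumulate]
  exact hφU.symm

variable [SecondCountableTopology X]

theorem exists_perfect_nonempty_subset_of_not_countable {D : ℕ → Set X}
    (hD : ∀ n, IsClosed (D n)) {U : Set X} (hU : IsOpen U) (h : ¬ ((⋃ n, D n) ∩ U).Countable) :
    ∃ Q : Set X, Perfect Q ∧ Q.Nonempty ∧ Q ⊆ (⋃ n, D n) ∩ closure U := by
  obtain ⟨n, hn⟩ : ∃ n, ¬ (D n ∩ U).Countable := by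
    by_contra! hct
    exact h (iUnion_inter U D ▸ countable_iUnion hct)
  obtain ⟨V, P, hV, hP, hDVP⟩ := exists_countable_union_perfect_of_isClosed (hD n)
  have hUP : (U ∩ P).Nonempty := by
    by_contra! hUP
    refine hn (hV.mono fun z ⟨hzD, hzU⟩ => ?_)
    rcases hDVP ▸ hzD with hzV | hzP
    · exact hzV
    · exact absurd ⟨hzU, hzP⟩ (hUP ▸ notMem_empty z)
  refine ⟨closure (U ∩ P), (hP.acc.open_inter hU).perfect_closure, hUP.closure, ?_⟩
  refine (closure_minimal (inter_subset_inter_left P subset_closure)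
    (isClosed_closure.inter hP.closed)).trans fun z ⟨hzU, hzP⟩ => ⟨?_, hzU⟩
  exact mem_iUnion_of_mem n (hDVP ▸ Or.inr hzP)

theorem exists_countable_perfect_sUnion_eq {D : ℕ → Set X} (hD : ∀ n, IsClosed (D n))
    (hR : ∀ x ∈ ⋃ n, D n, ∃ R ⊆ ⋃ n, D n, Perfect R ∧ x ∈ R) :
    ∃ 𝒬 : Set (Set X), 𝒬.Countable ∧ (∀ Q ∈ 𝒬, Perfect Q) ∧ ⋃ n, D n = ⋃₀ 𝒬 := by
  choose V P hV hP hDVP using fun n => exists_countable_union_perfect_of_isClosed (hD n)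
  choose! R hRD hR hxR using hR
  have hVD : ⋃ n, V n ⊆ ⋃ n, D n := iUnion_mono fun n => hDVP n ▸ subset_union_left
  refine ⟨range P ∪ R '' ⋃ n, V n, (countable_range P).union ((countable_iUnion hV).image R),
    ?_, ?_⟩
  · rintro Q (⟨n, rfl⟩ | ⟨x, hx, rfl⟩)
    exacts [hP n, hR x (hVD hx)]
  rw [sUnion_union, sUnion_range, sUnion_image]
  refine Subset.antisymm (iUnion_subset fun n z hz => ?_) (union_subset ?_ ?_)
  · rcases hDVP n ▸ hz with hzV | hzP
    · exact Or.inr (mem_biUnion (mem_iUnion_of_mem n hzV) (hxR z (hVD (mem_iUnion_of_mem n hzV))))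
    · exact Or.inl (mem_iUnion_of_mem n hzP)
  · exact iUnion_mono fun n => hDVP n ▸ subset_union_right
  · exact iUnion₂_subset fun x hx => hRD x (hVD hx)

end Topology

theorem isClosed_insert_iUnion_of_subset_closedBall {X : Type*} [MetricSpace X] {x : X}
    {Q : ℕ → Set X} {r : ℕ → ℝ} (hQ : ∀ k, IsClosed (Q k)) (hr : Antitone r)
    (hr0 : Tendsto r atTop (𝓝 0)) (hQr : ∀ k, Q k ⊆ closedBall x (r k)) :
    IsClosed (insert x (⋃ k, Q k)) := by
  suffices insert x (⋃ k, Q k) = ⋂ n, (accumulate Q n ∪ closedBall x (r n)) by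
    rw [this]
    exact isClosed_iInter fun n =>
      ((finite_Iic n).isClosed_biUnion fun k _ => hQ k).union isClosed_closedBall
  refine Subset.antisymm (insert_subset ?_ (iUnion_subset fun k => ?_)) fun z hz => ?_
  · exact mem_iInter.mpr fun n => Or.inr (mem_closedBall_self (hr.le_of_tendsto hr0 n))
  · refine subset_iInter fun n => ?_
    rcases le_total k n with hkn | hnk
    · exact subset_accumulate.trans (monotone_accumulate hkn) |>.trans subset_union_left
    · exact (hQr k).trans ((closedBall_subset_closedBall (hr hnk)).trans subset_union_right)
  by_cases hzx : z = x
  · exact mem_insert_iff.mpr (Or.inl hzx)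
  obtain ⟨n, hn⟩ := (hr0.eventually (gt_mem_nhds (dist_pos.mpr hzx))).exists
  rcases mem_iInter.mp hz n with hzQ | hzB
  · exact mem_insert_of_mem x (accumulate_subset_iUnion n hzQ)
  · exact absurd (mem_closedBall.mp hzB) hn.not_ge

theorem CDenseInItself.not_countable_inter_ball {F : Set ℝ} (hF : CDenseInItself F) {x : ℝ}
    (hx : x ∈ F) {ε : ℝ} (hε : 0 < ε) : ¬ (F ∩ ball x ε).Countable := by
  rw [Real.ball_eq_Ioo]
  rcases hF.2 (x - ε) (x + ε) (by linarith) with hempty | hcard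
  · exact absurd hempty (nonempty_iff_ne_empty.mp ⟨x, hx, by linarith, by linarith⟩)
  · exact fun hct => aleph0_lt_continuum.not_ge (hcard ▸ hct.le_aleph0)

theorem CDenseInItself.exists_perfect_subset_mem {D : ℕ → Set ℝ} (hD : ∀ n, IsClosed (D n))
    (hF : CDenseInItself (⋃ n, D n)) {x : ℝ} (hx : x ∈ ⋃ n, D n) :
    ∃ P ⊆ ⋃ n, D n, Perfect P ∧ x ∈ P := by
  set r : ℕ → ℝ := fun k => 1 / ((k : ℝ) + 1)
  have hr0 : Tendsto r atTop (𝓝 0) := tendsto_one_div_add_atTop_nhds_zero_nat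
  have hr : Antitone r := fun k l hkl => by dsimp only [r]; gcongr
  choose Q hQ hQne hQsub using fun k => exists_perfect_nonempty_subset_of_not_countable hD
    isOpen_ball (hF.not_countable_inter_ball hx (Nat.one_div_pos_of_nat (n := k)))
  have hQr : ∀ k, Q k ⊆ closedBall x (r k) :=
    fun k => (hQsub k).trans (inter_subset_right.trans closure_ball_subset_closedBall)
  refine ⟨insert x (⋃ k, Q k), insert_subset hx (iUnion_subset fun k =>
    (hQsub k).trans inter_subset_left), ⟨isClosed_insert_iUnion_of_subset_closedBall
    (fun k => (hQ k).closed) hr hr0 hQr, ?_⟩, mem_insert x _⟩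
  rintro z (rfl | hz)
  · refine accPt_iff_nhds.mpr fun U hU => ?_
    obtain ⟨ε, hε, hεU⟩ := Metric.mem_nhds_iff.mp hU
    obtain ⟨k, hk⟩ := (hr0.eventually (gt_mem_nhds hε)).exists
    obtain ⟨y, hy, hyz⟩ := (hQ k).acc.exists_ne (hQne k) z
    exact ⟨y, ⟨hεU ((mem_closedBall.mp (hQr k hy)).trans_lt hk),
      mem_insert_of_mem z (mem_iUnion_of_mem k hy)⟩, hyz⟩
  · exact (Preperfect.iUnion fun k => (hQ k).acc) z hz |>.mono
      (principal_mono.mpr (subset_insert x _))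

/-- If `F ⊆ ℝ` is a non-closed `Fσ` set which is `𝔠`-dense in itself, then
there is a strictly increasing (under inclusion) sequence `C₁ ⊊ C₂ ⊊ ⋯` of perfect sets
with `F = ⋃ₙ Cₙ`. -/
theorem stmt16 (F : Set ℝ)
    (hFσ : ∃ D : ℕ → Set ℝ, (∀ n, IsClosed (D n)) ∧ F = ⋃ n, D n)
    (hnc : ¬ IsClosed F) (hF : CDenseInItself F) :
    ∃ C : ℕ → Set ℝ, (∀ n, Perfect (C n)) ∧ (∀ n, C n ⊂ C (n + 1)) ∧ F = ⋃ n, C n := by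
  obtain ⟨D, hD, rfl⟩ := hFσ
  obtain ⟨𝒬, h𝒬, hperf, heq⟩ :=
    exists_countable_perfect_sUnion_eq hD fun x hx => hF.exists_perfect_subset_mem hD hx
  rw [heq] at hnc ⊢
  exact exists_perfect_ssubset_chain_eq_sUnion h𝒬 hperf hnc
end
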